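/- arXiv:2311.16743 — 2 statements merged into one kernel-verified Lean document; each statement's English description precedes it below -/
import Mathlib

section
/- For an L-smooth function accessed through a gradient with relative error α ∈ [0,1), the method x^{k+1} = x^k - h∇̃f(x^k) with step h = (1-α)/(L(1+α)²) satisfies f(x^{k+1}) ≤ f(x^k) - ((1-α)²/(2L(1+α)²))‖∇f(x^k)‖². -/
/-!
The descent lemma `f y ≤ f x + ⟪∇f x, y - x⟫ + L/2 ‖y - x‖²` applied to `y = x - h • ∇̃f x`,
together with `⟪∇f x, ∇̃f x⟫ ≥ (1 - α)‖∇f x‖²` and `‖∇̃f x‖ ≤ (1 + α)‖∇f x‖`, bounds the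
decrease by `(h(1 - α) - L h²(1 + α)²/2)‖∇f x‖²`; the step `h = (1 - α)/(L(1 + α)²)` maximises this
quadratic in `h`.
-/

open RealInnerProductSpace Set

section RelativeError

variable {E : Type*} [NormedAddCommGroup E] {u w : E} {α : ℝ}

theorem norm_le_one_add_mul_norm_of_norm_sub_le (hw : ‖w - u‖ ≤ α * ‖u‖) :
    ‖w‖ ≤ (1 + α) * ‖u‖ :=
  calc ‖w‖ ≤ ‖u‖ + ‖w - u‖ := norm_le_insert' w u
    _ ≤ (1 + α) * ‖u‖ := by linarith

variable [InnerProductSpace ℝ E]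

theorem one_sub_mul_norm_sq_le_inner_of_norm_sub_le (hw : ‖w - u‖ ≤ α * ‖u‖) :
    (1 - α) * ‖u‖ ^ 2 ≤ ⟪u, w⟫ :=
  calc (1 - α) * ‖u‖ ^ 2 = ‖u‖ ^ 2 - ‖u‖ * (α * ‖u‖) := by ring
    _ ≤ ‖u‖ ^ 2 - ‖u‖ * ‖w - u‖ := by gcongr
    _ ≤ ‖u‖ ^ 2 + ⟪u, w - u⟫ := by
        linarith [neg_le_of_abs_le (abs_real_inner_le_norm u (w - u))]
    _ = ⟪u, w⟫ := by rw [inner_sub_right, real_inner_self_eq_norm_sq]; ring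

end RelativeError

section Smooth

variable {E : Type*} [NormedAddCommGroup E] [InnerProductSpace ℝ E] [CompleteSpace E]
  {f : E → ℝ} {g : E → E} {L : ℝ}

theorem HasGradientAt.hasDerivAt_comp_add_smul {f' x v : E} {t : ℝ}
    (hf : HasGradientAt f f' (x + t • v)) :
    HasDerivAt (fun s : ℝ => f (x + s • v)) ⟪f', v⟫ t := by
  have hline : HasDerivAt (fun s : ℝ => x + s • v) v t := by
    simpa using ((hasDerivAt_id t).smul_const v).const_add x
  have h := hf.hasFDerivAt.comp_hasDerivAt t hline
  simp only [InnerProductSpace.toDual_apply_apply] at h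
  exact h

theorem le_add_inner_add_half_mul_sq_of_lipschitz_gradient
    (hgrad : ∀ x, HasGradientAt f (g x) x) (hLip : ∀ x y, ‖g x - g y‖ ≤ L * ‖x - y‖)
    (x y : E) :
    f y ≤ f x + ⟪g x, y - x⟫ + L / 2 * ‖y - x‖ ^ 2 := by
  set v := y - x
  let φ : ℝ → ℝ := fun t => f (x + t • v) - t * ⟪g x, v⟫ - L / 2 * t ^ 2 * ‖v‖ ^ 2
  have hφ : ∀ t, HasDerivAt φ (⟪g (x + t • v), v⟫ - ⟪g x, v⟫ - L * t * ‖v‖ ^ 2) t := by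
    intro t
    have hquad := ((hasDerivAt_pow 2 t).const_mul (L / 2)).mul_const (‖v‖ ^ 2)
    have hline := (hgrad (x + t • v)).hasDerivAt_comp_add_smul
    exact ((hline.sub ((hasDerivAt_id t).mul_const ⟪g x, v⟫)).sub hquad).congr_deriv
      (by simp only [Nat.cast_ofNat]; ring)
  have hφ_nonpos : ∀ t ∈ interior (Icc (0 : ℝ) 1),
      ⟪g (x + t • v), v⟫ - ⟪g x, v⟫ - L * t * ‖v‖ ^ 2 ≤ 0 := by
    intro t ht
    rw [interior_Icc] at ht
    calc ⟪g (x + t • v), v⟫ - ⟪g x, v⟫ - L * t * ‖v‖ ^ 2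
        = ⟪g (x + t • v) - g x, v⟫ - L * t * ‖v‖ ^ 2 := by rw [inner_sub_left]
      _ ≤ ‖g (x + t • v) - g x‖ * ‖v‖ - L * t * ‖v‖ ^ 2 := by
          gcongr; exact real_inner_le_norm _ _
      _ ≤ L * ‖t • v‖ * ‖v‖ - L * t * ‖v‖ ^ 2 := by
          gcongr; simpa using hLip (x + t • v) x
      _ = 0 := by rw [norm_smul, Real.norm_of_nonneg ht.1.le]; ring
  have hanti : AntitoneOn φ (Icc 0 1) :=
    antitoneOn_of_hasDerivWithinAt_nonpos (convex_Icc 0 1)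
      (fun t _ => (hφ t).continuousAt.continuousWithinAt)
      (fun t _ => (hφ t).hasDerivWithinAt) hφ_nonpos
  have h10 : φ 1 ≤ φ 0 := hanti (by simp) (by simp) zero_le_one
  simp only [φ, v, one_smul, add_sub_cancel, zero_smul, add_zero] at h10
  linarith

theorem apply_sub_smul_le_of_norm_sub_le_mul_norm
    (hgrad : ∀ x, HasGradientAt f (g x) x) (hLip : ∀ x y, ‖g x - g y‖ ≤ L * ‖x - y‖)
    (hL : 0 ≤ L) {x w : E} {α h : ℝ} (hh : 0 ≤ h) (hw : ‖w - g x‖ ≤ α * ‖g x‖) :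
    f (x - h • w) ≤ f x - (h * (1 - α) - L / 2 * h ^ 2 * (1 + α) ^ 2) * ‖g x‖ ^ 2 :=
  calc f (x - h • w) ≤ f x - h * ⟪g x, w⟫ + L / 2 * (h * ‖w‖) ^ 2 := by
        have hdesc := le_add_inner_add_half_mul_sq_of_lipschitz_gradient hgrad hLip x (x - h • w)
        rwa [sub_sub_cancel_left, inner_neg_right, real_inner_smul_right, norm_neg, norm_smul,
          Real.norm_of_nonneg hh, ← sub_eq_add_neg] at hdesc
    _ ≤ f x - h * ((1 - α) * ‖g x‖ ^ 2) + L / 2 * (h * ((1 + α) * ‖g x‖)) ^ 2 := by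
        gcongr
        · exact one_sub_mul_norm_sq_le_inner_of_norm_sub_le hw
        · exact norm_le_one_add_mul_norm_of_norm_sub_le hw
    _ = f x - (h * (1 - α) - L / 2 * h ^ 2 * (1 + α) ^ 2) * ‖g x‖ ^ 2 := by ring

end Smooth

/-- For an `L`-smooth function accessed through a gradient with relative error
`α ∈ [0,1)`, one step `x⁺ = x - h∇̃f(x)` with `h = (1-α)/(L(1+α)²)` satisfies
`f(x⁺) ≤ f(x) - ((1-α)²/(2L(1+α)²))‖∇f(x)‖²`. -/
theorem relative_error_gradient_step_decrease {n : ℕ} (f : EuclideanSpace ℝ (Fin n) → ℝ)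
    (g gt : EuclideanSpace ℝ (Fin n) → EuclideanSpace ℝ (Fin n)) (L α : ℝ)
    (hL : 0 < L) (hα0 : 0 ≤ α) (hα1 : α < 1)
    (hgrad : ∀ x, HasGradientAt f (g x) x)
    (hLip : ∀ x y, ‖g x - g y‖ ≤ L * ‖x - y‖)
    (herr : ∀ x, ‖gt x - g x‖ ≤ α * ‖g x‖)
    (x : EuclideanSpace ℝ (Fin n)) :
    f (x - ((1 - α) / (L * (1 + α) ^ 2)) • gt x)
      ≤ f x - (1 - α) ^ 2 / (2 * L * (1 + α) ^ 2) * ‖g x‖ ^ 2 := by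
  have hα : 0 < 1 + α := by linarith
  have hh : 0 ≤ (1 - α) / (L * (1 + α) ^ 2) := div_nonneg (by linarith) (by positivity)
  have hdecrease := apply_sub_smul_le_of_norm_sub_le_mul_norm hgrad hLip hL.le hh (herr x)
  have hcoeff : (1 - α) / (L * (1 + α) ^ 2) * (1 - α)
      - L / 2 * ((1 - α) / (L * (1 + α) ^ 2)) ^ 2 * (1 + α) ^ 2
      = (1 - α) ^ 2 / (2 * L * (1 + α) ^ 2) := by
    field_simp
    ring
  rwa [hcoeff] at hdecrease
end

section
/- The Frank–Wolfe (conditional gradient) method with steps γ_k = 2/(k+1) on a convex L-smooth function over a convex compact set Q of diameter R satisfies f(x^N) - f* ≤ 2LR²/(N+2) for all N ≥ 2. -/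
/-!
Let `h k = f (x k) - f x⋆`. The descent lemma for an `L`-smooth `f` bounds `f (x (k+1))` by the
linearization at `x k` plus `L/2 · γ² ‖y k - x k‖²`, and since `y k` minimizes the linearization
over `Q ∋ x⋆`, convexity bounds the linear term by `γ (f x⋆ - f (x k))`. Hence
`h (k+1) ≤ (1 - γ_k) h k + L R² / 2 · γ_k²`. As `γ_1 = 1`, the initial gap is forgotten, and
`h N ≤ 2 L R² / (N + 2)` follows by induction from `N = 2`.
-/

open AffineMap Set

section Smooth

variable {E : Type*} [NormedAddCommGroup E] [InnerProductSpace ℝ E] [CompleteSpace E]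
  {f : E → ℝ} {f' : E} {a b : E}

theorem HasGradientAt.hasDerivAt_comp_lineMap {t : ℝ} (hf : HasGradientAt f f' (lineMap a b t)) :
    HasDerivAt (fun s : ℝ => f (lineMap a b s)) (inner ℝ f' (b - a)) t := by
  simpa [Function.comp_def] using hf.hasFDerivAt.comp_hasDerivAt t hasDerivAt_lineMap

theorem ConvexOn.inner_gradient_le_sub {s : Set E} (hf : ConvexOn ℝ s f) (ha : a ∈ s) (hb : b ∈ s)
    (hgrad : HasGradientAt f f' a) : inner ℝ f' (b - a) ≤ f b - f a := by
  have hline : ConvexOn ℝ (lineMap a b ⁻¹' s) (fun t : ℝ => f (lineMap a b t)) :=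
    hf.comp_affineMap (lineMap a b)
  have hderiv := (lineMap_apply_zero a b (k := ℝ) ▸ hgrad).hasDerivAt_comp_lineMap
  simpa [slope_def_field] using hline.le_slope_of_hasDerivAt (x := 0) (y := 1)
    (by simpa using ha) (by simpa using hb) one_pos hderiv

theorem Convex.le_add_inner_add_of_lipschitz_gradient {s : Set E} {g : E → E} {L : ℝ}
    (hs : Convex ℝ s) (hgrad : ∀ x ∈ s, HasGradientAt f (g x) x)
    (hLip : ∀ x ∈ s, ∀ y ∈ s, ‖g x - g y‖ ≤ L * ‖x - y‖) (ha : a ∈ s) (hb : b ∈ s) :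
    f b ≤ f a + inner ℝ (g a) (b - a) + L / 2 * ‖b - a‖ ^ 2 := by
  set φ : ℝ → ℝ := fun t =>
    f (lineMap a b t) - t * inner ℝ (g a) (b - a) - L / 2 * t ^ 2 * ‖b - a‖ ^ 2
  have hmem : ∀ t ∈ Icc (0 : ℝ) 1, lineMap a b t ∈ s := fun t ht => hs.lineMap_mem ha hb ht
  have hderiv : ∀ t ∈ Icc (0 : ℝ) 1, HasDerivAt φ
      (inner ℝ (g (lineMap a b t)) (b - a) - inner ℝ (g a) (b - a) - L * t * ‖b - a‖ ^ 2) t := by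
    intro t ht
    have := (((hgrad _ (hmem t ht)).hasDerivAt_comp_lineMap.sub
      ((hasDerivAt_id t).mul_const (inner ℝ (g a) (b - a)))).sub
      (((hasDerivAt_pow 2 t).const_mul (L / 2)).mul_const (‖b - a‖ ^ 2)))
    refine this.congr_deriv ?_
    push_cast
    ring
  have hderiv_nonpos : ∀ t ∈ Icc (0 : ℝ) 1,
      inner ℝ (g (lineMap a b t)) (b - a) - inner ℝ (g a) (b - a) - L * t * ‖b - a‖ ^ 2 ≤ 0 := by
    intro t ht
    have hdist : ‖lineMap a b t - a‖ = t * ‖b - a‖ := by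
      rw [← vsub_eq_sub, lineMap_vsub_left, norm_smul, Real.norm_of_nonneg ht.1, vsub_eq_sub]
    rw [sub_nonpos]
    calc inner ℝ (g (lineMap a b t)) (b - a) - inner ℝ (g a) (b - a)
        = inner ℝ (g (lineMap a b t) - g a) (b - a) := (inner_sub_left _ _ _).symm
      _ ≤ ‖g (lineMap a b t) - g a‖ * ‖b - a‖ := real_inner_le_norm _ _
      _ ≤ L * ‖lineMap a b t - a‖ * ‖b - a‖ := by
        gcongr
        exact hLip _ (hmem t ht) _ ha
      _ = L * t * ‖b - a‖ ^ 2 := by rw [hdist]; ring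
  have hanti : AntitoneOn φ (Icc 0 1) :=
    antitoneOn_of_hasDerivWithinAt_nonpos (convex_Icc 0 1)
      (fun t ht => (hderiv t ht).continuousAt.continuousWithinAt)
      (fun t ht => (hderiv t (interior_subset ht)).hasDerivWithinAt)
      (fun t ht => hderiv_nonpos t (interior_subset ht))
  have hφ := hanti (left_mem_Icc.mpr zero_le_one) (right_mem_Icc.mpr zero_le_one) zero_le_one
  simp only [φ, lineMap_apply_zero, lineMap_apply_one] at hφ
  linarith

theorem ConvexOn.frankWolfe_step_sub_le {Q : Set E} {g : E → E} {L R γ : ℝ} {x y z : E}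
    (hf : ConvexOn ℝ Q f) (hgrad : ∀ x ∈ Q, HasGradientAt f (g x) x)
    (hLip : ∀ x ∈ Q, ∀ y ∈ Q, ‖g x - g y‖ ≤ L * ‖x - y‖) (hL : 0 ≤ L)
    (hx : x ∈ Q) (hy : y ∈ Q) (hz : z ∈ Q) (hyz : inner ℝ (g x) y ≤ inner ℝ (g x) z)
    (hyx : ‖y - x‖ ≤ R) (hγ : γ ∈ Icc (0 : ℝ) 1) :
    f ((1 - γ) • x + γ • y) - f z ≤ (1 - γ) * (f x - f z) + L * R ^ 2 / 2 * γ ^ 2 := by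
  obtain ⟨hγ0, hγ1⟩ := hγ
  have hx' : (1 - γ) • x + γ • y ∈ Q := hf.1 hx hy (sub_nonneg.2 hγ1) hγ0 (sub_add_cancel 1 γ)
  have hdir : (1 - γ) • x + γ • y - x = γ • (y - x) := by module
  have hdescent := hf.1.le_add_inner_add_of_lipschitz_gradient hgrad hLip hx hx'
  rw [hdir, inner_smul_right, norm_smul, Real.norm_of_nonneg hγ0] at hdescent
  have hdual : inner ℝ (g x) (y - x) ≤ f z - f x := by
    calc inner ℝ (g x) (y - x) ≤ inner ℝ (g x) (z - x) := by
          simpa only [inner_sub_right] using sub_le_sub_right hyz _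
      _ ≤ f z - f x := hf.inner_gradient_le_sub hx hz (hgrad x hx)
  have hstep : f ((1 - γ) • x + γ • y) ≤ f x + γ * (f z - f x) + L / 2 * (γ * R) ^ 2 := by
    have := mul_nonneg hγ0 (norm_nonneg (y - x))
    calc _ ≤ f x + γ * inner ℝ (g x) (y - x) + L / 2 * (γ * ‖y - x‖) ^ 2 := hdescent
      _ ≤ _ := by gcongr
  linarith

end Smooth

theorem le_two_mul_div_of_frankWolfe_recursion {C : ℝ} (hC : 0 ≤ C) {h : ℕ → ℝ}
    (hrec : ∀ k : ℕ, 1 ≤ k →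
      h (k + 1) ≤ (1 - 2 / ((k : ℝ) + 1)) * h k + C / 2 * (2 / ((k : ℝ) + 1)) ^ 2) :
    ∀ N : ℕ, 2 ≤ N → h N ≤ 2 * C / ((N : ℝ) + 2) := by
  intro N hN
  induction N, hN using Nat.le_induction with
  | base => linarith [hrec 1 le_rfl]
  | succ m hm ih =>
    have hm' : (2 : ℝ) ≤ m := by exact_mod_cast hm
    have hγ : 0 ≤ 1 - 2 / ((m : ℝ) + 1) := by
      rw [sub_nonneg, div_le_one (by positivity)]; linarith
    have hslack : (1 - 2 / ((m : ℝ) + 1)) * (2 * C / (m + 2)) + C / 2 * (2 / ((m : ℝ) + 1)) ^ 2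
        ≤ 2 * C / (m + 3) := by
      have hslack_eq : 2 * C / (m + 3) - ((1 - 2 / ((m : ℝ) + 1)) * (2 * C / (m + 2))
          + C / 2 * (2 / ((m : ℝ) + 1)) ^ 2)
          = 2 * C * (m - 1) / ((m + 1) ^ 2 * (m + 2) * (m + 3)) := by
        field_simp
        ring
      have hm1 : (0 : ℝ) ≤ m - 1 := by linarith
      rw [← sub_nonneg, hslack_eq]
      positivity
    calc h (m + 1) ≤ (1 - 2 / ((m : ℝ) + 1)) * h m + C / 2 * (2 / ((m : ℝ) + 1)) ^ 2 :=
          hrec m (by omega)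
      _ ≤ (1 - 2 / ((m : ℝ) + 1)) * (2 * C / (m + 2)) + C / 2 * (2 / ((m : ℝ) + 1)) ^ 2 := by
          gcongr
      _ ≤ 2 * C / ((m + 1 : ℕ) + 2) := by
          rw [show ((m + 1 : ℕ) : ℝ) + 2 = m + 3 by push_cast; ring]
          exact hslack

theorem frank_wolfe_rate_general {n : ℕ} (f : EuclideanSpace ℝ (Fin n) → ℝ)
    (g : EuclideanSpace ℝ (Fin n) → EuclideanSpace ℝ (Fin n))
    (Q : Set (EuclideanSpace ℝ (Fin n))) (L R : ℝ) (hL : 0 < L)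
    (hQconv : Convex ℝ Q)
    (hconv : ConvexOn ℝ Set.univ f)
    (hgrad : ∀ x, HasGradientAt f (g x) x)
    (hLip : ∀ x ∈ Q, ∀ y ∈ Q, ‖g x - g y‖ ≤ L * ‖x - y‖)
    (hdiam : ∀ x ∈ Q, ∀ y ∈ Q, ‖x - y‖ ≤ R)
    (xstar : EuclideanSpace ℝ (Fin n)) (hxstar : xstar ∈ Q)
    (x yv : ℕ → EuclideanSpace ℝ (Fin n)) (hx1 : x 1 ∈ Q)
    (hy : ∀ k, yv k ∈ Q ∧ ∀ z ∈ Q, (inner ℝ (g (x k)) (yv k) : ℝ) ≤ inner ℝ (g (x k)) z)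
    (hstep : ∀ k ≥ 1, x (k + 1)
      = (1 - 2 / ((k : ℝ) + 1)) • x k + (2 / ((k : ℝ) + 1)) • yv k) :
    ∀ N : ℕ, 2 ≤ N → f (x N) - f xstar ≤ 2 * L * R ^ 2 / ((N : ℝ) + 2) := by
  have hfQ : ConvexOn ℝ Q f := hconv.subset (subset_univ Q) hQconv
  have hγ : ∀ k : ℕ, 1 ≤ k → 2 / ((k : ℝ) + 1) ∈ Icc (0 : ℝ) 1 := fun k hk =>
    ⟨by positivity, (div_le_one (by positivity)).2 (by norm_cast; omega)⟩
  have hxQ : ∀ k : ℕ, 1 ≤ k → x k ∈ Q := by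
    intro k hk
    induction k, hk using Nat.le_induction with
    | base => exact hx1
    | succ k hk hxk =>
      rw [hstep k hk]
      exact hQconv hxk (hy k).1 (sub_nonneg.2 (hγ k hk).2) (hγ k hk).1 (sub_add_cancel 1 _)
  have hgap : ∀ k : ℕ, 1 ≤ k → f (x (k + 1)) - f xstar ≤
      (1 - 2 / ((k : ℝ) + 1)) * (f (x k) - f xstar) + L * R ^ 2 / 2 * (2 / ((k : ℝ) + 1)) ^ 2 := by
    intro k hk
    rw [hstep k hk]
    exact hfQ.frankWolfe_step_sub_le (fun x _ => hgrad x) hLip hL.le (hxQ k hk) (hy k).1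
      hxstar ((hy k).2 xstar hxstar) (hdiam _ (hy k).1 _ (hxQ k hk)) (hγ k hk)
  intro N hN
  simpa only [mul_assoc] using le_two_mul_div_of_frankWolfe_recursion (C := L * R ^ 2)
    (h := fun k => f (x k) - f xstar) (by positivity) hgap N hN

/-- Frank–Wolfe (conditional gradient) method with steps `γ_k = 2/(k+1)` on a
convex `L`-smooth function over a convex compact set `Q` of diameter `R`:
`f(x^N) - f* ≤ 2LR²/(N+2)` for all `N ≥ 2`. -/
theorem frank_wolfe_rate {n : ℕ} (f : EuclideanSpace ℝ (Fin n) → ℝ)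
    (g : EuclideanSpace ℝ (Fin n) → EuclideanSpace ℝ (Fin n))
    (Q : Set (EuclideanSpace ℝ (Fin n))) (L R : ℝ) (hL : 0 < L)
    (hQc : IsCompact Q) (hQconv : Convex ℝ Q) (hQne : Q.Nonempty)
    (hconv : ConvexOn ℝ Set.univ f)
    (hgrad : ∀ x, HasGradientAt f (g x) x)
    (hLip : ∀ x ∈ Q, ∀ y ∈ Q, ‖g x - g y‖ ≤ L * ‖x - y‖)
    (hdiam : ∀ x ∈ Q, ∀ y ∈ Q, ‖x - y‖ ≤ R)
    (xstar : EuclideanSpace ℝ (Fin n)) (hxstar : xstar ∈ Q)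
    (hmin : ∀ z ∈ Q, f xstar ≤ f z)
    (x yv : ℕ → EuclideanSpace ℝ (Fin n)) (hx1 : x 1 ∈ Q)
    (hy : ∀ k, yv k ∈ Q ∧ ∀ z ∈ Q, (inner ℝ (g (x k)) (yv k) : ℝ) ≤ inner ℝ (g (x k)) z)
    (hstep : ∀ k ≥ 1, x (k + 1)
      = (1 - 2 / ((k : ℝ) + 1)) • x k + (2 / ((k : ℝ) + 1)) • yv k) :
    ∀ N : ℕ, 2 ≤ N → f (x N) - f xstar ≤ 2 * L * R ^ 2 / ((N : ℝ) + 2) :=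
  frank_wolfe_rate_general f g Q L R hL hQconv hconv hgrad hLip hdiam xstar hxstar x yv hx1 hy hstep
end
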